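/- Every atom of a computable probability measure on 2^ω is a computable sequence: if μ is computable and μ({x}) > 0 for some x ∈ 2^ω, then x is computable. -/

import Mathlib

open MeasureTheory

/-- The length-`n` initial segment of an infinite binary sequence. -/
def pref (x : ℕ → Bool) (n : ℕ) : List Bool := List.ofFn (fun i : Fin n => x i)

/-- The cylinder of sequences extending a finite binary string. -/
def cyl (σ : List Bool) : Set (ℕ → Bool) := {x | pref x σ.length = σ}

/-- The Bernoulli premeasure: `μ_p([σ]) = p^{#₀(σ)} (1-p)^{#₁(σ)}`. -/
noncomputable def bernoulliPre (p : ℝ) (σ : List Bool) : ℝ :=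
  p ^ (σ.count false) * (1 - p) ^ (σ.count true)

/-- `f` is computable relative to oracle `z`: some computable, monotonically
consistent prefix-procedure converges on the oracle's prefixes. -/
def RelComputable {α : Type} [Primcodable α] (z : ℕ → Bool) (f : ℕ → α) : Prop :=
  ∃ γ : ℕ → List Bool → Option α, Computable₂ γ ∧
    (∀ n σ τ a, σ <+: τ → γ n σ = some a → γ n τ = some a) ∧
    ∀ n, ∃ m, γ n (pref z m) = some (f n)

/-- The `i`-th component of the effectively open test generated by `G`. -/
def testSet (G : ℕ → Option (List Bool)) (i : ℕ) : Set (ℕ → Bool) :=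
  ⋃ n, (G (Nat.pair i n)).elim ∅ cyl

/-- Martin-Löf randomness of `x` with respect to `μ`, with tests computable
relative to the oracle `z`. -/
def MLRandomRel (z : ℕ → Bool) (μ : MeasureTheory.Measure (ℕ → Bool)) (x : ℕ → Bool) : Prop :=
  ∀ G : ℕ → Option (List Bool), RelComputable z G →
    (∀ i, μ (testSet G i) ≤ ((2 : ENNReal)⁻¹) ^ i) → ∃ i, x ∉ testSet G i

/-- (Blind / unrelativized) Martin-Löf randomness with respect to `μ`. -/
def MLRandom (μ : MeasureTheory.Measure (ℕ → Bool)) (x : ℕ → Bool) : Prop :=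
  ∀ G : ℕ → Option (List Bool), Computable G →
    (∀ i, μ (testSet G i) ≤ ((2 : ENNReal)⁻¹) ^ i) → ∃ i, x ∉ testSet G i

/-- A measure on Cantor space is computable if its values on cylinders are
uniformly computable reals. -/
def ComputableMeasure (ν : MeasureTheory.Measure (ℕ → Bool)) : Prop :=
  ∃ f : List Bool → ℕ → ℚ, Computable₂ f ∧
    ∀ σ n, |(f σ n : ℝ) - (ν (cyl σ)).toReal| ≤ 1 / 2 ^ n

/-- A real is computable if it is approximable to precision `2^{-n}` by a
computable sequence of rationals. -/
def ComputableReal (r : ℝ) : Prop :=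
  ∃ f : ℕ → ℚ, Computable f ∧ ∀ n, |(f n : ℝ) - r| ≤ 1 / 2 ^ n


namespace RatOrd
open Encodable Denumerable

def mag (i : ℕ) : ℕ := if i % 2 = 0 then i / 2 else i / 2 + 1

lemma encode_int_ofNat (n : ℕ) : encode (Int.ofNat n) = 2 * n := rfl
lemma encode_int_negSucc (k : ℕ) : encode (Int.negSucc k) = 2 * k + 1 := rfl

lemma mag_encode (z : ℤ) : mag (encode z) = z.natAbs := by
  cases z with
  | ofNat n =>
    rw [encode_int_ofNat]; unfold mag; rw [if_pos (by omega)]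
    rw [show (Int.ofNat n).natAbs = n from rfl]; omega
  | negSucc k =>
    rw [encode_int_negSucc]; unfold mag; rw [if_neg (by omega)]
    simp only [Int.natAbs_negSucc]; omega

def badD (a b d : ℕ) : Bool := decide (2 ≤ d) && decide (a % d = 0) && decide (b % d = 0)

def coprimeB (a b : ℕ) : Bool :=
  (List.range (a + b + 1)).foldr (fun d r => (!badD a b d) && r) true

lemma foldr_and_eq_true (a b : ℕ) (l : List ℕ) :
    (l.foldr (fun d r => (!badD a b d) && r) true = true) ↔ ∀ d ∈ l, badD a b d = false := by
  induction l with
  | nil => simp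
  | cons c l ih => simp [ih, Bool.and_eq_true]

lemma badD_eq_false_iff (a b d : ℕ) :
    badD a b d = false ↔ ¬(2 ≤ d ∧ d ∣ a ∧ d ∣ b) := by
  have hd : ∀ c : ℕ, c % d = 0 ↔ d ∣ c := fun c => Nat.dvd_iff_mod_eq_zero.symm
  simp only [badD, Bool.and_eq_false_iff, decide_eq_false_iff_not, not_le, hd]
  constructor
  · rintro ((h|h)|h) ⟨h2,h3,h4⟩ <;> [omega; exact h h3; exact h h4]
  · intro h
    by_cases h2 : 2 ≤ d
    · by_cases h3 : d ∣ a
      · right; intro h4; exact h ⟨h2,h3,h4⟩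
      · left; right; exact h3
    · left; left; omega

lemma coprimeB_iff {a b : ℕ} (hb : b ≠ 0) : coprimeB a b = true ↔ Nat.gcd a b = 1 := by
  rw [coprimeB, foldr_and_eq_true]
  constructor
  · intro h
    by_contra hg
    have hg0 : Nat.gcd a b ≠ 0 := fun h0 => hb (Nat.eq_zero_of_gcd_eq_zero_right h0)
    have hg2 : 2 ≤ Nat.gcd a b := by omega
    have hgb : Nat.gcd a b ≤ b := Nat.le_of_dvd (Nat.pos_of_ne_zero hb) (Nat.gcd_dvd_right a b)
    have := h (Nat.gcd a b) (by rw [List.mem_range]; omega)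
    rw [badD_eq_false_iff] at this
    exact this ⟨hg2, Nat.gcd_dvd_left a b, Nat.gcd_dvd_right a b⟩
  · intro h d _
    rw [badD_eq_false_iff]
    rintro ⟨h2, hda, hdb⟩
    have : d ∣ Nat.gcd a b := Nat.dvd_gcd hda hdb
    rw [h] at this
    have := Nat.le_of_dvd one_pos this
    omega

def canonB (m : ℕ) : Bool := (decide (m.unpair.2 ≠ 0)) && coprimeB (mag m.unpair.1) m.unpair.2

def ratCode (q : ℚ) : ℕ := Nat.pair (encode q.num) q.den

lemma encode_rat (q : ℚ) : @encode ℚ Rat.instEncodable q = ratCode q := by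
  rw [show (@encode ℚ Rat.instEncodable q) = encode
    (⟨q.num, q.den, q.pos, q.reduced⟩ : Σ n : ℤ, {d : ℕ // 0 < d ∧ n.natAbs.Coprime d}) from rfl]
  rw [encode_sigma_val, Encodable.Subtype.encode_eq]; rfl

lemma canonB_ratCode (q : ℚ) : canonB (ratCode q) = true := by
  have hd : q.den ≠ 0 := q.den_nz
  simp only [canonB, ratCode, Nat.unpair_pair, mag_encode, Bool.and_eq_true, decide_eq_true_eq]
  exact ⟨hd, (coprimeB_iff hd).mpr q.reduced⟩

lemma canonB_iff_mem {m : ℕ} :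
    canonB m = true ↔ m ∈ Set.range (@encode ℚ Rat.instEncodable) := by
  constructor
  · intro h
    simp only [canonB, Bool.and_eq_true, decide_eq_true_eq] at h
    obtain ⟨hd, hcop⟩ := h
    set i := m.unpair.1 with hi
    set d := m.unpair.2 with hdd
    set z : ℤ := if i % 2 = 0 then Int.ofNat (i / 2) else Int.negSucc (i / 2) with hz
    have hez : encode z = i := by
      by_cases hp : i % 2 = 0
      · rw [hz, if_pos hp, encode_int_ofNat]; omega
      · rw [hz, if_neg hp, encode_int_negSucc]; omega
    have hmz : z.natAbs = mag i := by rw [← hez, mag_encode]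
    have hcop' : z.natAbs.Coprime d := by
      rw [Nat.Coprime, hmz]; exact (coprimeB_iff hd).mp hcop
    refine ⟨⟨z, d, hd, hcop'⟩, ?_⟩
    rw [encode_rat, ratCode]
    show Nat.pair (encode z) d = m
    rw [hez, hi, hdd, Nat.pair_unpair]
  · rintro ⟨q, rfl⟩
    rw [encode_rat]; exact canonB_ratCode q

abbrev S : Set ℕ := Set.range (@encode ℚ Rat.instEncodable)

instance : DecidablePred (· ∈ S) := Encodable.decidableRangeEncode ℚ

instance : Infinite S := Infinite.of_injective _ (Equiv.ofInjective _ encode_injective).injective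

lemma next_exists (m : ℕ) : ∃ m', (decide (m < m') && canonB m') = true := by
  have hinf : S.Infinite := Set.infinite_coe_iff.mp inferInstance
  obtain ⟨b, hb, hlt⟩ := hinf.exists_gt m
  exact ⟨b, by simp [hlt, canonB_iff_mem.mpr hb]⟩

lemma first_exists : ∃ m, canonB m = true := ⟨ratCode 0, canonB_ratCode 0⟩

noncomputable def next (m : ℕ) : ℕ := Nat.find (next_exists m)

lemma next_spec (m : ℕ) : m < next m ∧ canonB (next m) = true := by
  have := Nat.find_spec (next_exists m)
  rw [Bool.and_eq_true, decide_eq_true_eq] at this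
  exact this

lemma next_min {m m' : ℕ} (h1 : m < m') (h2 : canonB m' = true) : next m ≤ m' :=
  Nat.find_min' _ (by simp [h1, h2])

noncomputable def rfun : ℕ → ℕ :=
  fun n => Nat.rec (Nat.find first_exists) (fun _ ih => next ih) n

lemma rfun_eq (n : ℕ) : rfun n = ↑(Nat.Subtype.ofNat S n) := by
  induction n with
  | zero =>
    have h1 : canonB ↑(⊥ : S) = true := canonB_iff_mem.mpr (⊥ : S).2
    have h2 : canonB (Nat.find first_exists) = true := Nat.find_spec first_exists
    refine le_antisymm (Nat.find_min' _ h1) ?_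
    have : (⊥ : S) ≤ ⟨Nat.find first_exists, canonB_iff_mem.mp h2⟩ := bot_le
    exact_mod_cast this
  | succ n ih =>
    show next (rfun n) = ↑(Nat.Subtype.succ (Nat.Subtype.ofNat S n))
    rw [ih]
    set x := Nat.Subtype.ofNat S n with hx
    have hmem : canonB ↑(Nat.Subtype.succ x) = true := canonB_iff_mem.mpr (Nat.Subtype.succ x).2
    have hlt : (x : ℕ) < ↑(Nat.Subtype.succ x) := Subtype.coe_lt_coe.mpr (Nat.Subtype.lt_succ_self x)
    refine le_antisymm (next_min hlt hmem) ?_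
    obtain ⟨hgt, hcan⟩ := next_spec (x : ℕ)
    have : Nat.Subtype.succ x ≤ ⟨next ↑x, canonB_iff_mem.mp hcan⟩ :=
      Nat.Subtype.succ_le_of_lt (Subtype.coe_lt_coe.mp hgt)
    exact_mod_cast this

lemma encode_ofNat_rat (n : ℕ) :
    @encode ℚ Rat.instEncodable (ofNat ℚ n) = ↑(Nat.Subtype.ofNat S n) := by
  have h1 : ofNat ℚ n = (equivRangeEncode ℚ).symm (Nat.Subtype.ofNat S n) := rfl
  rw [h1]
  have h2 : ((equivRangeEncode ℚ) ((equivRangeEncode ℚ).symm (Nat.Subtype.ofNat S n)) : ℕ)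
      = ↑(Nat.Subtype.ofNat S n) := by rw [Equiv.apply_symm_apply]
  exact h2

lemma rfun_encode (q : ℚ) :
    rfun (@encode ℚ (Primcodable.toEncodable) q) = ratCode q := by
  have h0 : @encode ℚ (Primcodable.toEncodable) q = @encode ℚ Denumerable.toEncodable q := rfl
  rw [h0, rfun_eq, ← encode_ofNat_rat, Denumerable.ofNat_encode, encode_rat]

def intLtCode (i₁ d₁ i₂ d₂ : ℕ) : Bool :=
  if i₁ % 2 = 0 then
    (if i₂ % 2 = 0 then decide ((i₁ / 2) * d₂ < (i₂ / 2) * d₁) else false)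
  else
    (if i₂ % 2 = 0 then true else decide ((i₂ / 2 + 1) * d₁ < (i₁ / 2 + 1) * d₂))

def ltCode (m₁ m₂ : ℕ) : Bool := intLtCode m₁.unpair.1 m₁.unpair.2 m₂.unpair.1 m₂.unpair.2

lemma rat_lt_iff (p q : ℚ) : p < q ↔ p.num * (q.den : ℤ) < q.num * (p.den : ℤ) := by
  have hp : (0 : ℚ) < (p.den : ℚ) := by exact_mod_cast p.pos
  have hq : (0 : ℚ) < (q.den : ℚ) := by exact_mod_cast q.pos
  constructor
  · intro h
    have h' : (p.num : ℚ) / (p.den : ℚ) < (q.num : ℚ) / (q.den : ℚ) := by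
      rwa [Rat.num_div_den, Rat.num_div_den]
    have := (div_lt_div_iff₀ hp hq).mp h'
    exact_mod_cast this
  · intro h
    rw [← Rat.num_div_den p, ← Rat.num_div_den q]
    exact (div_lt_div_iff₀ hp hq).mpr (by exact_mod_cast h)

lemma ltCode_correct (p q : ℚ) : ltCode (ratCode p) (ratCode q) = decide (p < q) := by
  have hpd : (0 : ℤ) < (p.den : ℤ) := by exact_mod_cast p.pos
  have hqd : (0 : ℤ) < (q.den : ℤ) := by exact_mod_cast q.pos
  simp only [ltCode, ratCode, Nat.unpair_pair]
  rcases hp : p.num with a | k₁ <;> rcases hq : q.num with b | k₂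
  · rw [encode_int_ofNat, encode_int_ofNat]
    simp only [intLtCode]
    rw [if_pos (by omega), if_pos (by omega),
      show 2 * a / 2 = a from by omega, show 2 * b / 2 = b from by omega]
    rw [decide_eq_decide]
    rw [rat_lt_iff, hp, hq, Int.ofNat_eq_natCast, Int.ofNat_eq_natCast]
    constructor <;> intro h <;> exact_mod_cast h
  · rw [encode_int_ofNat, encode_int_negSucc]
    simp only [intLtCode]
    rw [if_pos (by omega), if_neg (by omega)]
    symm; rw [decide_eq_false_iff_not, rat_lt_iff, hp, hq, not_lt]
    have h1 : Int.negSucc k₂ * (p.den : ℤ) < 0 :=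
      mul_neg_of_neg_of_pos (Int.negSucc_lt_zero k₂) hpd
    have h2 : (0:ℤ) ≤ Int.ofNat a * (q.den : ℤ) :=
      mul_nonneg (by rw [show Int.ofNat a = (a:ℤ) from rfl]; positivity) (le_of_lt hqd)
    linarith
  · rw [encode_int_negSucc, encode_int_ofNat]
    simp only [intLtCode]
    rw [if_neg (by omega), if_pos (by omega)]
    symm; rw [decide_eq_true_eq, rat_lt_iff, hp, hq]
    have h1 : Int.negSucc k₁ * (q.den : ℤ) < 0 :=
      mul_neg_of_neg_of_pos (Int.negSucc_lt_zero k₁) hqd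
    have h2 : (0:ℤ) ≤ Int.ofNat b * (p.den : ℤ) :=
      mul_nonneg (by rw [show Int.ofNat b = (b:ℤ) from rfl]; positivity) (le_of_lt hpd)
    linarith
  · rw [encode_int_negSucc, encode_int_negSucc]
    simp only [intLtCode]
    rw [if_neg (by omega), if_neg (by omega),
      show (2 * k₁ + 1) / 2 = k₁ from by omega, show (2 * k₂ + 1) / 2 = k₂ from by omega]
    rw [decide_eq_decide]
    rw [rat_lt_iff, hp, hq, Int.negSucc_eq, Int.negSucc_eq, neg_mul, neg_mul, neg_lt_neg_iff]
    constructor <;> intro h <;> exact_mod_cast h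


lemma primrec_mag : Primrec mag := by
  unfold mag
  exact Primrec.ite
    (PrimrecRel.comp Primrec.eq (Primrec.nat_mod.comp .id (.const 2)) (.const 0))
    (Primrec.nat_div.comp .id (.const 2))
    (Primrec.succ.comp (Primrec.nat_div.comp .id (.const 2)))

lemma primrec_badD : Primrec (fun p : ℕ × ℕ × ℕ => badD p.1 p.2.1 p.2.2) := by
  unfold badD
  have h1 : Primrec (fun p : ℕ × ℕ × ℕ => decide (2 ≤ p.2.2)) :=
    (PrimrecRel.comp Primrec.nat_le (.const 2) (Primrec.snd.comp .snd)).decide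
  have h2 : Primrec (fun p : ℕ × ℕ × ℕ => decide (p.1 % p.2.2 = 0)) :=
    PrimrecRel.comp Primrec.eq
      (Primrec.nat_mod.comp .fst (Primrec.snd.comp .snd)) (.const 0) |>.decide
  have h3 : Primrec (fun p : ℕ × ℕ × ℕ => decide (p.2.1 % p.2.2 = 0)) :=
    PrimrecRel.comp Primrec.eq
      (Primrec.nat_mod.comp (Primrec.fst.comp .snd) (Primrec.snd.comp .snd)) (.const 0) |>.decide
  exact (Primrec.dom_bool₂ (· && ·)).comp ((Primrec.dom_bool₂ (· && ·)).comp h1 h2) h3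

lemma primrec_coprimeB : Primrec₂ coprimeB := by
  unfold coprimeB
  apply Primrec.list_foldr (α := ℕ × ℕ) (β := ℕ) (σ := Bool)
    (f := fun p => List.range (p.1 + p.2 + 1)) (g := fun _ => true)
    (h := fun p q => (!badD p.1 p.2 q.1) && q.2)
  · exact Primrec.list_range.comp (Primrec.succ.comp (Primrec.nat_add.comp .fst .snd))
  · exact .const true
  · exact Primrec₂.mk ((Primrec.dom_bool₂ (· && ·)).comp
      ((Primrec.dom_bool (!·)).comp (primrec_badD.comp
        (Primrec.pair (Primrec.fst.comp .fst)
          (Primrec.pair (Primrec.snd.comp .fst) (Primrec.fst.comp .snd)))))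
      (Primrec.snd.comp .snd))

lemma primrec_canonB : Primrec canonB := by
  unfold canonB
  have h1 : Primrec (fun m : ℕ => decide (m.unpair.2 ≠ 0)) := by
    apply PrimrecPred.decide; apply PrimrecPred.not (p := fun m : ℕ => m.unpair.2 = 0)
    exact PrimrecRel.comp Primrec.eq (Primrec.snd.comp Primrec.unpair) (.const 0)
  exact (Primrec.dom_bool₂ (· && ·)).comp h1
    (primrec_coprimeB.comp (primrec_mag.comp (Primrec.fst.comp Primrec.unpair))
      (Primrec.snd.comp Primrec.unpair))

lemma primrec_ltCode : Primrec₂ ltCode := by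
  unfold ltCode intLtCode
  have u1 : Primrec (fun p : ℕ × ℕ => p.1.unpair.1) := Primrec.fst.comp (Primrec.unpair.comp .fst)
  have v1 : Primrec (fun p : ℕ × ℕ => p.1.unpair.2) := Primrec.snd.comp (Primrec.unpair.comp .fst)
  have u2 : Primrec (fun p : ℕ × ℕ => p.2.unpair.1) := Primrec.fst.comp (Primrec.unpair.comp .snd)
  have v2 : Primrec (fun p : ℕ × ℕ => p.2.unpair.2) := Primrec.snd.comp (Primrec.unpair.comp .snd)
  have heven : ∀ {f : ℕ × ℕ → ℕ}, Primrec f → PrimrecPred (fun p => f p % 2 = 0) :=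
    fun hf => PrimrecRel.comp Primrec.eq (Primrec.nat_mod.comp hf (.const 2)) (.const 0)
  have hdiv : ∀ {f : ℕ × ℕ → ℕ}, Primrec f → Primrec (fun p => f p / 2) :=
    fun hf => Primrec.nat_div.comp hf (.const 2)
  apply Primrec₂.mk
  apply Primrec.ite (heven u1)
  · apply Primrec.ite (heven u2)
    · exact PrimrecRel.comp Primrec.nat_lt
        (Primrec.nat_mul.comp (hdiv u1) v2) (Primrec.nat_mul.comp (hdiv u2) v1) |>.decide
    · exact .const false
  · apply Primrec.ite (heven u2)
    · exact .const true
    · exact PrimrecRel.comp Primrec.nat_lt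
        (Primrec.nat_mul.comp (Primrec.succ.comp (hdiv u2)) v1)
        (Primrec.nat_mul.comp (Primrec.succ.comp (hdiv u1)) v2) |>.decide

theorem computable_nat_find {α : Type*} [Primcodable α] {p : α → ℕ → Bool}
    (hp : Computable₂ p) (H : ∀ a, ∃ n, p a n = true) :
    Computable fun a => Nat.find (H a) := by
  have hpart : Partrec fun a => Nat.rfind (p a : ℕ →. Bool) :=
    Partrec.rfind hp.partrec₂
  apply hpart.of_eq_tot
  intro a
  rw [Nat.mem_rfind]
  constructor
  · show true ∈ Part.some (p a (Nat.find (H a)))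
    rw [Part.mem_some_iff]; exact (Nat.find_spec (H a)).symm
  · intro m hm
    show false ∈ Part.some (p a m)
    rw [Part.mem_some_iff]
    have := Nat.find_min (H a) hm
    simpa using Ne.symm this



lemma computable_next : Computable next := by
  have hp : Computable₂ (fun m n : ℕ => decide (m < n) && canonB n) := by
    have : Primrec₂ (fun m n : ℕ => decide (m < n) && canonB n) :=
      Primrec₂.mk ((Primrec.dom_bool₂ (· && ·)).comp
        (PrimrecRel.comp Primrec.nat_lt .fst .snd).decide (primrec_canonB.comp .snd))
    exact this.to_comp
  exact computable_nat_find hp next_exists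

noncomputable def rfirst : ℕ := Nat.find first_exists

lemma computable_rfun : Computable rfun := by
  have h := Computable.nat_rec (f := @id ℕ) (g := fun _ : ℕ => Nat.find first_exists)
    (h := fun (_ : ℕ) (p : ℕ × ℕ) => next p.2) Computable.id (.const _)
    (computable_next.comp (Computable.snd.comp .snd)).to₂
  exact h.of_eq fun n => rfl

theorem computable_ratLt : Computable₂ (fun p q : ℚ => decide (p < q)) := by
  have henc : Computable (fun q : ℚ => rfun (@encode ℚ Primcodable.toEncodable q)) :=
    computable_rfun.comp Computable.encode
  have h : Computable (fun pr : ℚ × ℚ => ltCode (rfun (@encode ℚ Primcodable.toEncodable pr.1))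
      (rfun (@encode ℚ Primcodable.toEncodable pr.2))) :=
    primrec_ltCode.to_comp.comp (henc.comp .fst) (henc.comp .snd)
  exact h.of_eq fun pr => by rw [rfun_encode, rfun_encode, ltCode_correct]

end RatOrd

namespace CylLemmas
open Filter Topology

lemma pref_length (x : ℕ → Bool) (n : ℕ) : (pref x n).length = n := List.length_ofFn

lemma pref_eq_pref_iff {y x : ℕ → Bool} {n : ℕ} :
    pref y n = pref x n ↔ ∀ i < n, y i = x i := by
  unfold pref
  rw [List.ofFn_inj]
  constructor
  · intro h i hi; exact congrFun h ⟨i, hi⟩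
  · intro h; funext i; exact h i i.2

lemma mem_cyl_pref_iff {y x : ℕ → Bool} {n : ℕ} :
    y ∈ cyl (pref x n) ↔ ∀ i < n, y i = x i := by
  show pref y (pref x n).length = pref x n ↔ _
  rw [pref_length, pref_eq_pref_iff]

lemma self_mem_cyl_pref (x : ℕ → Bool) (n : ℕ) : x ∈ cyl (pref x n) :=
  mem_cyl_pref_iff.mpr (fun _ _ => rfl)

lemma mem_cyl_iff {y : ℕ → Bool} {σ : List Bool} :
    y ∈ cyl σ ↔ ∀ j (h : j < σ.length), y j = σ.get ⟨j, h⟩ := by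
  show pref y σ.length = σ ↔ _
  unfold pref
  rw [List.ext_get_iff]
  simp only [List.length_ofFn, true_and]
  constructor
  · intro h j hj
    have := h j (by simpa using hj) hj
    simpa [List.get_ofFn] using this
  · intro h j h1 h2
    simpa [List.get_ofFn] using h j h2

lemma measurable_cyl (σ : List Bool) : MeasurableSet (cyl σ) := by
  have : cyl σ = ⋂ j : Fin σ.length, (fun y : ℕ → Bool => y j.1) ⁻¹' {σ.get j} := by
    ext y
    simp only [Set.mem_iInter, Set.mem_preimage, Set.mem_singleton_iff, mem_cyl_iff]
    exact ⟨fun h j => h j.1 j.2, fun h j hj => h ⟨j, hj⟩⟩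
  rw [this]
  exact MeasurableSet.iInter fun j =>
    (measurable_pi_apply j.1) (measurableSet_singleton _)

lemma cyl_pref_antitone {x : ℕ → Bool} : Antitone (fun n => cyl (pref x n)) := by
  intro m n h y hy
  rw [mem_cyl_pref_iff] at *
  exact fun i hi => hy i (lt_of_lt_of_le hi h)

lemma singleton_eq_iInter (x : ℕ → Bool) : {x} = ⋂ n, cyl (pref x n) := by
  ext y
  simp only [Set.mem_singleton_iff, Set.mem_iInter, mem_cyl_pref_iff]
  constructor
  · rintro rfl; exact fun _ _ _ => rfl
  · intro h; funext i; exact h (i + 1) i (Nat.lt_succ_self i)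

lemma pref_succ (x : ℕ → Bool) (n : ℕ) : pref x (n + 1) = pref x n ++ [x n] := by
  unfold pref
  rw [List.ofFn_succ']
  simp [List.concat_eq_append]

lemma mem_cyl_append {y : ℕ → Bool} {σ : List Bool} {c : Bool} :
    y ∈ cyl (σ ++ [c]) ↔ y ∈ cyl σ ∧ y σ.length = c := by
  show pref y (σ ++ [c]).length = σ ++ [c] ↔ pref y σ.length = σ ∧ _
  rw [List.length_append, List.length_singleton, pref_succ]
  rw [← List.concat_eq_append, ← List.concat_eq_append, List.concat_inj]

lemma cyl_split (μ : Measure (ℕ → Bool)) (σ : List Bool) (b : Bool) :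
    μ (cyl σ) = μ (cyl (σ ++ [b])) + μ (cyl (σ ++ [!b])) := by
  have hU : cyl σ = cyl (σ ++ [b]) ∪ cyl (σ ++ [!b]) := by
    ext y
    simp only [Set.mem_union, mem_cyl_append]
    constructor
    · intro h
      rcases Bool.eq_or_eq_not (y σ.length) b with h' | h'
      · exact Or.inl ⟨h, h'⟩
      · exact Or.inr ⟨h, h'⟩
    · rintro (⟨h, _⟩ | ⟨h, _⟩) <;> exact h
  have hD : Disjoint (cyl (σ ++ [b])) (cyl (σ ++ [!b])) := by
    rw [Set.disjoint_left]
    intro y h1 h2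
    rw [mem_cyl_append] at h1 h2
    rw [h1.2] at h2
    cases b <;> simp at h2
  rw [hU, measure_union hD (measurable_cyl _)]

end CylLemmas

open CylLemmas Filter Topology in
theorem atom_of_computable_measure_is_computable (μ : Measure (ℕ → Bool))
    [IsProbabilityMeasure μ] (hμ : ComputableMeasure μ)
    (x : ℕ → Bool) (hx : 0 < μ {x}) : Computable x := by
  obtain ⟨f, hfc, hfa⟩ := hμ
  set a : ℝ := (μ {x}).toReal with ha
  have hxne : μ {x} ≠ ⊤ := measure_ne_top μ _
  have hapos : 0 < a := ENNReal.toReal_pos (ne_of_gt hx) hxne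
  -- convergence of cylinder measures to the atom's measure
  have hIt : Tendsto (fun n => μ (cyl (pref x n))) atTop (𝓝 (μ {x})) := by
    have := tendsto_measure_iInter_atTop (μ := μ)
      (fun n => (measurable_cyl (pref x n)).nullMeasurableSet)
      cyl_pref_antitone ⟨0, measure_ne_top μ _⟩
    rw [← singleton_eq_iInter] at this
    exact this
  have hItR : Tendsto (fun n => (μ (cyl (pref x n))).toReal) atTop (𝓝 a) :=
    (ENNReal.tendsto_toReal hxne).comp hIt
  obtain ⟨N, hN⟩ := Filter.eventually_atTop.mp
    (hItR.eventually_lt_const (by linarith : a < a + a / 4))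
  -- precision
  obtain ⟨k, hk⟩ : ∃ k : ℕ, (1 : ℝ) / 2 ^ k ≤ a / 8 := by
    obtain ⟨k, hk⟩ := pow_unbounded_of_one_lt (8 / a) (by norm_num : (1 : ℝ) < 2)
    refine ⟨k, ?_⟩
    rw [div_lt_iff₀ hapos] at hk
    rw [div_le_div_iff₀ (by positivity) (by norm_num : (0:ℝ) < 8)]
    nlinarith [pow_pos (by norm_num : (0:ℝ) < 2) k]
  -- the decision procedure computes the correct bit
  have key : ∀ n, N ≤ n →
      decide (f (pref x n ++ [false]) k < f (pref x n ++ [true]) k) = x n := by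
    intro n hn
    have hsub : μ {x} ≤ μ (cyl (pref x n ++ [x n])) := by
      rw [← pref_succ]
      exact measure_mono (Set.singleton_subset_iff.mpr (self_mem_cyl_pref x (n + 1)))
    have hT : a ≤ (μ (cyl (pref x n ++ [x n]))).toReal :=
      ENNReal.toReal_mono (measure_ne_top μ _) hsub
    have hsplit : (μ (cyl (pref x n))).toReal
        = (μ (cyl (pref x n ++ [x n]))).toReal + (μ (cyl (pref x n ++ [!x n]))).toReal := by
      rw [cyl_split μ (pref x n) (x n), ENNReal.toReal_add (measure_ne_top μ _) (measure_ne_top μ _)]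
    have hσle : (μ (cyl (pref x n))).toReal < a + a / 4 := hN n hn
    have hW : (μ (cyl (pref x n ++ [!x n]))).toReal ≤ a / 4 := by linarith
    have h1 := hfa (pref x n ++ [x n]) k
    have h2 := hfa (pref x n ++ [!x n]) k
    rw [abs_le] at h1 h2
    cases hxn : x n with
    | true =>
      rw [hxn] at hT hW h1 h2
      rw [Bool.not_true] at hW h2
      rw [decide_eq_true_eq]
      have : ((f (pref x n ++ [false]) k : ℝ)) < ((f (pref x n ++ [true]) k : ℝ)) := by
        linarith [h1.1, h1.2, h2.1, h2.2]
      exact_mod_cast this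
    | false =>
      rw [hxn] at hT hW h1 h2
      rw [Bool.not_false] at hW h2
      rw [decide_eq_false_iff_not, not_lt]
      have : ((f (pref x n ++ [true]) k : ℝ)) ≤ ((f (pref x n ++ [false]) k : ℝ)) := by
        linarith [h1.1, h1.2, h2.1, h2.2]
      exact_mod_cast this
  -- the computable construction
  classical
  set bit : List Bool → Bool := fun σ => decide (f (σ ++ [false]) k < f (σ ++ [true]) k)
    with hbit
  set g : ℕ → List Bool :=
    fun m => Nat.rec (pref x N) (fun _ ih => ih ++ [bit ih]) m with hg
  have hginv : ∀ m, g m = pref x (N + m) := by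
    intro m
    induction m with
    | zero => rfl
    | succ m ih =>
      show g m ++ [bit (g m)] = pref x (N + (m + 1))
      rw [ih, show N + (m + 1) = (N + m) + 1 from rfl, pref_succ]
      have hb := key (N + m) (Nat.le_add_right N m)
      simp only [hbit]
      rw [hb]
  have hxeq : ∀ n, (g (n + 1)).getD n false = x n := by
    intro n
    rw [hginv (n + 1)]
    have hlt : n < (pref x (N + (n + 1))).length := by rw [pref_length]; omega
    rw [List.getD_eq_getElem _ _ hlt]
    show (List.ofFn _)[n] = x n
    exact List.getElem_ofFn ..
  -- computability
  have hbitc : Computable bit := by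
    have happ : ∀ b : Bool, Computable (fun σ : List Bool => σ ++ [b]) := fun b =>
      Primrec.list_concat.to_comp.comp Computable.id (Computable.const b)
    have h1 : Computable (fun σ : List Bool => f (σ ++ [false]) k) :=
      hfc.comp (happ false) (Computable.const k)
    have h2 : Computable (fun σ : List Bool => f (σ ++ [true]) k) :=
      hfc.comp (happ true) (Computable.const k)
    exact RatOrd.computable_ratLt.comp h1 h2
  have hgc : Computable g := by
    have hstep : Computable₂ (fun (_ : ℕ) (p : ℕ × List Bool) => p.2 ++ [bit p.2]) := by
      have hp2 : Computable (fun q : ℕ × (ℕ × List Bool) => q.2.2) :=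
        Computable.snd.comp Computable.snd
      exact (Primrec.list_concat.to_comp.comp hp2 (hbitc.comp hp2)).to₂
    have h := Computable.nat_rec Computable.id (Computable.const (pref x N)) hstep
    exact h.of_eq fun n => rfl
  have hfinal : Computable (fun n => (g (n + 1)).getD n false) :=
    (Primrec.list_getD false).to_comp.comp (hgc.comp Computable.succ) Computable.id
  exact hfinal.of_eq hxeq
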